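/- Fix a spin weight s∈ℤ, an integer ℓ≥|s|, and σ∈ℂ. Let Ψ̂:(1,∞)→ℂ be twice differentiable and define Φ̂(ρ) = e^{σρ_*(ρ)} (ρ/(ρ−1))^s Ψ̂(ρ), where e^{σρ_*(ρ)} = e^{σρ}(ρ−1)^σ with (ρ−1)^σ = exp(σ log(ρ−1)). Then Ψ̂ satisfies the frequency-domain Bardeen–Press equation −∂_{ρ_*}²Ψ̂ + (2s(ρ−1/2)/ρ²)∂_{ρ_*}Ψ̂ + (2sσ(ρ−3/2)/ρ²)Ψ̂ + V(ρ)Ψ̂ + σ²Ψ̂ = 0 on (1,∞) if and only if Φ̂ satisfies the confluent Heun normal form Φ̂''(ρ) + P(ρ,σ)Φ̂'(ρ) + Q(ρ)Φ̂(ρ) = 0 on (1,∞). -/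

import Mathlib

/-!
Writing the prefactor as `exp (E ρ)` with `E = σρ + σ log(ρ-1) + s log ρ - s log(ρ-1)`, the
product rule gives `Φ̂'' + PΦ̂' + QΦ̂ = exp E · (Ψ̂'' + (2E' + P)Ψ̂' + (E'' + E'² + PE' + Q)Ψ̂)`,
while `∂_{ρ_*}² Ψ̂ = w (w' Ψ̂' + w Ψ̂'')` with `w = (ρ-1)/ρ`. A rational-function identity then
shows that the Heun operator applied to `Φ̂` is `-exp E · (ρ/(ρ-1))²` times the Bardeen–Press
operator applied to `Ψ̂`, and this factor never vanishes on `(1,∞)`.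
-/

noncomputable section

/-- `P(ρ,σ) = −2σ − (3s+1)/ρ + (1+s−2σ)/(ρ−1)`. -/
def Pcoef (s : ℤ) (σ ρ : ℂ) : ℂ := -2*σ - (3*(s:ℂ)+1)/ρ + (1+(s:ℂ)-2*σ)/(ρ-1)

/-- `Q(ρ) = (s+1)(2s+1)/ρ² − ((s+1)²+ℓ(ℓ+1))/(ρ(ρ−1))`. -/
def Qcoef (s ℓ : ℤ) (ρ : ℂ) : ℂ :=
  ((s:ℂ)+1)*(2*(s:ℂ)+1)/ρ^2 - (((s:ℂ)+1)^2 + (ℓ:ℂ)*((ℓ:ℂ)+1))/(ρ*(ρ-1))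

/-- The Bardeen–Press potential
`V(ρ) = (1−1/ρ)[(s+1)/ρ³ + (ℓ−s)(ℓ+s+1)/ρ²]`. -/
def Vpot (s ℓ : ℤ) (ρ : ℝ) : ℂ :=
  (1 - 1/(ρ:ℂ)) * (((s:ℂ)+1)/(ρ:ℂ)^3 + ((ℓ:ℂ)-(s:ℂ))*((ℓ:ℂ)+(s:ℂ)+1)/(ρ:ℂ)^2)

/-- The tortoise-coordinate derivative `∂_{ρ_*} = ((ρ−1)/ρ)∂_ρ` acting on
functions of `ρ`. -/
def Dstar (F : ℝ → ℂ) (ρ : ℝ) : ℂ := (((ρ:ℂ) - 1)/(ρ:ℂ)) * deriv F ρ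

/-- `Φ̂(ρ) = e^{σρ_*(ρ)} (ρ/(ρ−1))^s Ψ̂(ρ)`, with
`e^{σρ_*(ρ)} = e^{σρ}(ρ−1)^σ` and `(ρ−1)^σ = exp(σ log(ρ−1))`. -/
def PhiOfPsi (s : ℤ) (σ : ℂ) (Ψ : ℝ → ℂ) (ρ : ℝ) : ℂ :=
  Complex.exp (σ*(ρ:ℂ)) * Complex.exp (σ * (Real.log (ρ-1) : ℂ)) *
    ((ρ:ℂ)/((ρ:ℂ)-1))^s * Ψ ρ

open Complex Filter Topology

def bardeenPressOp (s ℓ : ℤ) (σ : ℂ) (Ψ : ℝ → ℂ) (ρ : ℝ) : ℂ :=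
  -(Dstar (Dstar Ψ) ρ) + (2*(s:ℂ)*((ρ:ℂ) - 1/2)/(ρ:ℂ)^2) * Dstar Ψ ρ +
    (2*(s:ℂ)*σ*((ρ:ℂ) - 3/2)/(ρ:ℂ)^2) * Ψ ρ + Vpot s ℓ ρ * Ψ ρ + σ^2 * Ψ ρ

def confluentHeunOp (s ℓ : ℤ) (σ : ℂ) (Φ : ℝ → ℂ) (ρ : ℝ) : ℂ :=
  deriv (deriv Φ) ρ + Pcoef s σ (ρ:ℂ) * deriv Φ ρ + Qcoef s ℓ (ρ:ℂ) * Φ ρ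

section GaugeTransform

variable {E Ψ : ℝ → ℂ}

theorem deriv_cexp_mul {h : ℂ} {t : ℝ} (hE : HasDerivAt E h t)
    (hΨ : DifferentiableAt ℝ Ψ t) :
    deriv (fun u => exp (E u) * Ψ u) t = exp (E t) * (h * Ψ t + deriv Ψ t) := by
  rw [(hE.cexp.fun_mul hΨ.hasDerivAt).deriv]
  ring

theorem deriv_deriv_cexp_mul {U : Set ℝ} (hU : IsOpen U) {h : ℝ → ℂ} {h' : ℂ} {t : ℝ}
    (ht : t ∈ U) (hE : ∀ u ∈ U, HasDerivAt E (h u) u) (hh : HasDerivAt h h' t)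
    (hΨ1 : ∀ u ∈ U, DifferentiableAt ℝ Ψ u) (hΨ2 : DifferentiableAt ℝ (deriv Ψ) t) :
    deriv (deriv fun u => exp (E u) * Ψ u) t
      = exp (E t) * ((h' + h t ^ 2) * Ψ t + 2 * h t * deriv Ψ t + deriv (deriv Ψ) t) := by
  have hderiv : deriv (fun u => exp (E u) * Ψ u) =ᶠ[𝓝 t]
      fun u => exp (E u) * (h u * Ψ u + deriv Ψ u) :=
    eventually_of_mem (hU.mem_nhds ht) fun u hu => deriv_cexp_mul (hE u hu) (hΨ1 u hu)
  rw [hderiv.deriv_eq,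
    ((hE t ht).cexp.fun_mul ((hh.fun_mul (hΨ1 t ht).hasDerivAt).fun_add hΨ2.hasDerivAt)).deriv]
  ring

end GaugeTransform

theorem Dstar_Dstar_apply {Ψ : ℝ → ℂ} {ρ : ℝ} (hρ : ρ ≠ 0)
    (hΨ2 : DifferentiableAt ℝ (deriv Ψ) ρ) :
    Dstar (Dstar Ψ) ρ
      = ((ρ:ℂ) - 1) / ρ * (deriv Ψ ρ / (ρ:ℂ)^2 + ((ρ:ℂ) - 1) / ρ * deriv (deriv Ψ) ρ) := by
  have hρ' : (ρ:ℂ) ≠ 0 := ofReal_ne_zero.mpr hρ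
  have hw : HasDerivAt (fun z : ℂ => (z - 1) / z) (1 / (ρ:ℂ)^2) ρ :=
    (((hasDerivAt_id' (ρ:ℂ)).sub_const 1).fun_div (hasDerivAt_id' (ρ:ℂ)) hρ').congr_deriv
      (by ring)
  have hDstar : HasDerivAt (Dstar Ψ)
      (1 / (ρ:ℂ)^2 * deriv Ψ ρ + ((ρ:ℂ) - 1) / ρ * deriv (deriv Ψ) ρ) ρ :=
    hw.comp_ofReal.fun_mul hΨ2.hasDerivAt
  rw [Dstar, hDstar.deriv]
  ring

theorem ofReal_sub_one_ne_zero {ρ : ℝ} (hρ : ρ ≠ 1) : (ρ:ℂ) - 1 ≠ 0 := by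
  rw [sub_ne_zero]
  exact_mod_cast hρ

def gaugeExponent (s : ℤ) (σ : ℂ) (t : ℝ) : ℂ :=
  σ * t + σ * (Real.log (t - 1) : ℂ) + (s * (Real.log t : ℂ) - s * (Real.log (t - 1) : ℂ))

def gaugeLogDeriv (s : ℤ) (σ ρ : ℂ) : ℂ :=
  σ + σ / (ρ - 1) + s / ρ - s / (ρ - 1)

theorem PhiOfPsi_eq_cexp_mul (s : ℤ) (σ : ℂ) (Ψ : ℝ → ℂ) {t : ℝ} (ht : 1 < t) :
    PhiOfPsi s σ Ψ t = exp (gaugeExponent s σ t) * Ψ t := by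
  have ht0 : 0 < t := one_pos.trans ht
  have ht1 : 0 < t - 1 := sub_pos.mpr ht
  have hzpow : ((t:ℂ) / ((t:ℂ) - 1)) ^ s
      = exp (s * (Real.log t : ℂ) - s * (Real.log (t - 1) : ℂ)) := by
    rw [show (t:ℂ) / ((t:ℂ) - 1) = ((t / (t - 1) : ℝ) : ℂ) by push_cast; rfl,
      ← ofReal_zpow, ← Real.rpow_intCast, Real.rpow_def_of_pos (div_pos ht0 ht1),
      Real.log_div ht0.ne' ht1.ne', ofReal_exp]
    push_cast
    ring_nf
  rw [PhiOfPsi, hzpow, gaugeExponent, exp_add, exp_add]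

theorem hasDerivAt_gaugeExponent (s : ℤ) (σ : ℂ) {t : ℝ} (ht : 1 < t) :
    HasDerivAt (gaugeExponent s σ) (gaugeLogDeriv s σ t) t := by
  have hlog : HasDerivAt (fun u : ℝ => (Real.log u : ℂ)) ((t⁻¹ : ℝ) : ℂ) t :=
    (Real.hasDerivAt_log (one_pos.trans ht).ne').ofReal_comp
  have hlog1 : HasDerivAt (fun u : ℝ => (Real.log (u - 1) : ℂ)) (((t - 1)⁻¹ : ℝ) : ℂ) t := by
    simpa using ((Real.hasDerivAt_log (sub_pos.mpr ht).ne').comp t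
      ((hasDerivAt_id t).sub_const 1)).ofReal_comp
  have hid : HasDerivAt (fun u : ℝ => (u:ℂ)) 1 t := ofRealCLM.hasDerivAt
  refine (((hid.const_mul σ).fun_add (hlog1.const_mul σ)).fun_add
    ((hlog.const_mul (s:ℂ)).fun_sub (hlog1.const_mul (s:ℂ)))).congr_deriv ?_
  simp only [gaugeLogDeriv, ofReal_inv, ofReal_sub, ofReal_one]
  ring

theorem hasDerivAt_gaugeLogDeriv (s : ℤ) (σ : ℂ) {ρ : ℂ} (h0 : ρ ≠ 0) (h1 : ρ - 1 ≠ 0) :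
    HasDerivAt (gaugeLogDeriv s σ) (-σ / (ρ - 1)^2 - s / ρ^2 + s / (ρ - 1)^2) ρ := by
  have hz : HasDerivAt (fun z : ℂ => z) 1 ρ := hasDerivAt_id' ρ
  have hz1 : HasDerivAt (fun z : ℂ => z - 1) 1 ρ := hz.sub_const 1
  show HasDerivAt (fun z : ℂ => σ + σ / (z - 1) + s / z - s / (z - 1)) _ ρ
  exact ((((hasDerivAt_const ρ σ).fun_add ((hasDerivAt_const ρ σ).fun_div hz1 h1)).fun_add
    ((hasDerivAt_const ρ (s:ℂ)).fun_div hz h0)).fun_sub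
    ((hasDerivAt_const ρ (s:ℂ)).fun_div hz1 h1)).congr_deriv (by ring)

theorem confluentHeunOp_PhiOfPsi (s ℓ : ℤ) (σ : ℂ) {Ψ : ℝ → ℂ}
    (hΨ1 : ∀ ρ ∈ Set.Ioi (1:ℝ), DifferentiableAt ℝ Ψ ρ)
    (hΨ2 : ∀ ρ ∈ Set.Ioi (1:ℝ), DifferentiableAt ℝ (deriv Ψ) ρ) {ρ : ℝ} (hρ : 1 < ρ) :
    confluentHeunOp s ℓ σ (PhiOfPsi s σ Ψ) ρ
      = -exp (gaugeExponent s σ ρ) * ((ρ:ℂ)^2 / ((ρ:ℂ) - 1)^2) * bardeenPressOp s ℓ σ Ψ ρ := by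
  have h0 : (ρ:ℂ) ≠ 0 := ofReal_ne_zero.mpr (one_pos.trans hρ).ne'
  have h1 : (ρ:ℂ) - 1 ≠ 0 := ofReal_sub_one_ne_zero hρ.ne'
  have hPhi : PhiOfPsi s σ Ψ =ᶠ[𝓝 ρ] fun u => exp (gaugeExponent s σ u) * Ψ u :=
    eventually_of_mem (Ioi_mem_nhds hρ) fun u hu => PhiOfPsi_eq_cexp_mul s σ Ψ hu
  have hd1 := deriv_cexp_mul (hasDerivAt_gaugeExponent s σ hρ) (hΨ1 ρ hρ)
  have hd2 := deriv_deriv_cexp_mul isOpen_Ioi hρ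
    (fun u hu => hasDerivAt_gaugeExponent s σ hu)
    (hasDerivAt_gaugeLogDeriv s σ h0 h1).comp_ofReal hΨ1 (hΨ2 ρ hρ)
  rw [confluentHeunOp, bardeenPressOp, hPhi.deriv.deriv_eq, hPhi.deriv_eq, hPhi.eq_of_nhds,
    hd1, hd2, Dstar_Dstar_apply (one_pos.trans hρ).ne' (hΨ2 ρ hρ), Dstar, Vpot]
  simp only [gaugeLogDeriv, Pcoef, Qcoef]
  field_simp
  ring

theorem bardeenPress_iff_confluentHeun_general
    (s ℓ : ℤ) (σ : ℂ) (Ψ : ℝ → ℂ)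
    (hΨ1 : ∀ ρ ∈ Set.Ioi (1:ℝ), DifferentiableAt ℝ Ψ ρ)
    (hΨ2 : ∀ ρ ∈ Set.Ioi (1:ℝ), DifferentiableAt ℝ (deriv Ψ) ρ) :
    (∀ ρ ∈ Set.Ioi (1:ℝ),
        -(Dstar (Dstar Ψ) ρ) + (2*(s:ℂ)*((ρ:ℂ) - 1/2)/(ρ:ℂ)^2) * Dstar Ψ ρ +
          (2*(s:ℂ)*σ*((ρ:ℂ) - 3/2)/(ρ:ℂ)^2) * Ψ ρ + Vpot s ℓ ρ * Ψ ρ +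
          σ^2 * Ψ ρ = 0) ↔
      (∀ ρ ∈ Set.Ioi (1:ℝ),
        deriv (deriv (PhiOfPsi s σ Ψ)) ρ + Pcoef s σ (ρ:ℂ) * deriv (PhiOfPsi s σ Ψ) ρ +
          Qcoef s ℓ (ρ:ℂ) * PhiOfPsi s σ Ψ ρ = 0) := by
  refine forall₂_congr fun ρ (hρ : 1 < ρ) => ?_
  have hfactor : -exp (gaugeExponent s σ ρ) * ((ρ:ℂ)^2 / ((ρ:ℂ) - 1)^2) ≠ 0 := by
    have h0 : (ρ:ℂ) ≠ 0 := ofReal_ne_zero.mpr (one_pos.trans hρ).ne'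
    simp [exp_ne_zero, h0, ofReal_sub_one_ne_zero hρ.ne']
  change bardeenPressOp s ℓ σ Ψ ρ = 0 ↔ confluentHeunOp s ℓ σ (PhiOfPsi s σ Ψ) ρ = 0
  rw [confluentHeunOp_PhiOfPsi s ℓ σ hΨ1 hΨ2 hρ, mul_eq_zero_iff_left hfactor]

/-- `Ψ̂` satisfies the frequency-domain Bardeen–Press equation on `(1,∞)` iff
`Φ̂ = e^{σρ_*}(ρ/(ρ−1))^s Ψ̂` satisfies the confluent Heun normal form
`Φ̂'' + P(ρ,σ)Φ̂' + Q(ρ)Φ̂ = 0` there. -/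
theorem bardeenPress_iff_confluentHeun
    (s ℓ : ℤ) (hsl : |s| ≤ ℓ) (σ : ℂ) (Ψ : ℝ → ℂ)
    (hΨ1 : ∀ ρ ∈ Set.Ioi (1:ℝ), DifferentiableAt ℝ Ψ ρ)
    (hΨ2 : ∀ ρ ∈ Set.Ioi (1:ℝ), DifferentiableAt ℝ (deriv Ψ) ρ) :
    (∀ ρ ∈ Set.Ioi (1:ℝ),
        -(Dstar (Dstar Ψ) ρ) + (2*(s:ℂ)*((ρ:ℂ) - 1/2)/(ρ:ℂ)^2) * Dstar Ψ ρ +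
          (2*(s:ℂ)*σ*((ρ:ℂ) - 3/2)/(ρ:ℂ)^2) * Ψ ρ + Vpot s ℓ ρ * Ψ ρ +
          σ^2 * Ψ ρ = 0) ↔
      (∀ ρ ∈ Set.Ioi (1:ℝ),
        deriv (deriv (PhiOfPsi s σ Ψ)) ρ + Pcoef s σ (ρ:ℂ) * deriv (PhiOfPsi s σ Ψ) ρ +
          Qcoef s ℓ (ρ:ℂ) * PhiOfPsi s σ Ψ ρ = 0) :=
  bardeenPress_iff_confluentHeun_general s ℓ σ Ψ hΨ1 hΨ2
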